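/- Let G be a finite graph with orientation ε, and let Δ(G,ε) = {f ∈ F(G,ε;ℝ) : 0 < |f(e)| < 1 for all e}. Then Δ(G,ε) is the disjoint union over all orientations ρ of G of the sets Δ^ρ(G,ε) = {f ∈ F(G,ε;ℝ) : 0 < [ρ,ε](e) f(e) < 1 for all e}, and only the totally cyclic orientations ρ contribute nonempty pieces. -/

import Mathlib

open Finset

/-- A multigraph on vertex type `V` with edge type `E`: each edge has two
(not necessarily distinct) endpoints, given with a reference orientation
from `fst` to `snd`. -/
structure Multigraph (V E : Type) where
  fst : E → V
  snd : E → V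

namespace Multigraph

variable {V E : Type} [Fintype V] [Fintype E] [DecidableEq V] (G : Multigraph V E)

/-- An orientation of `G` is a choice, for each edge, of whether to keep (`false`)
or reverse (`true`) the reference direction.  The source of edge `e` under
orientation `o`. -/
def src (o : E → Bool) (e : E) : V := if o e then G.snd e else G.fst e

/-- The target of edge `e` under orientation `o`. -/
def tgt (o : E → Bool) (e : E) : V := if o e then G.fst e else G.snd e

/-- The incidence number `ε(v,e)` of vertex `v` and edge `e` under orientation `o`:
`+1` if `e` enters `v`, `-1` if `e` leaves `v`, and `0` for loops and non-incident
edges (a loop contributes `+1` and `-1`, which cancel). -/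
def inc (o : E → Bool) (v : V) (e : E) : ℤ :=
  (if G.tgt o e = v then 1 else 0) - (if G.src o e = v then 1 else 0)

/-- `f : E → A` is a flow of `(G,o)` with values in the abelian group `A`:
the conservation law `∑_e ε(v,e) f(e) = 0` holds at every vertex `v`. -/
def IsFlow {A : Type} [AddCommGroup A] (o : E → Bool) (f : E → A) : Prop :=
  ∀ v : V, ∑ e : E, G.inc o v e • f e = 0

/-- The set of edges of the cut `[S, Sᶜ]`: edges with exactly one endpoint in `S`. -/
def cutEdges (S : Finset V) : Finset E :=
  Finset.univ.filter fun e => ¬ ((G.fst e ∈ S) ↔ (G.snd e ∈ S))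

/-- `(G,o)` has a directed cut: a nonempty cut `[S,Sᶜ]` all of whose edges are
directed from `S` to `Sᶜ`. -/
def HasDirectedCut (o : E → Bool) : Prop :=
  ∃ S : Finset V, (∃ e, e ∈ G.cutEdges S ∧ G.src o e ∈ S) ∧
    ∀ e ∈ G.cutEdges S, G.src o e ∈ S

/-- An orientation is totally cyclic if it admits no directed cut. -/
def TotallyCyclic (o : E → Bool) : Prop := ¬ G.HasDirectedCut o

/-- Two orientations are Eulerian equivalent if the spanning subgraph induced by
the edges on which they disagree is directed Eulerian (in-degree = out-degree at
every vertex) with respect to the first orientation. -/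
def EulerianEquiv (o₁ o₂ : E → Bool) : Prop :=
  ∀ v : V, ∑ e : E, (if o₁ e = o₂ e then 0 else G.inc o₁ v e) = 0

/-- The components relation: `v` and `w` are joined by an edge. -/
def rel (v w : V) : Prop :=
  ∃ e : E, (G.fst e = v ∧ G.snd e = w) ∨ (G.fst e = w ∧ G.snd e = v)

/-- The number of connected components `c(G)`. -/
noncomputable def numComponents : ℕ := Nat.card (Quot G.rel)

/-- The cycle rank `n(G) = |E| - |V| + c(G)`. -/
noncomputable def cycleRank : ℕ :=
  Fintype.card E + G.numComponents - Fintype.card V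

/-- `G` is bridgeless: no cut consists of a single edge. -/
def Bridgeless : Prop := ∀ S : Finset V, (G.cutEdges S).card ≠ 1

end Multigraph

/-- The coupling `[ρ,σ](e)`: `+1` if the orientations agree on `e`, `-1` otherwise. -/
def Multigraph.coupling {E : Type} (ρ σ : E → Bool) (e : E) : ℝ :=
  if ρ e = σ e then 1 else -1

/-- The relatively open piece `Δ^ρ(G,ε) = {f flow : 0 < [ρ,ε](e) f(e) < 1}`. -/
def Multigraph.openPiece {V E : Type} [Fintype V] [Fintype E] [DecidableEq V]
    (G : Multigraph V E) (ε ρ : E → Bool) : Set (E → ℝ) :=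
  {f | G.IsFlow ε f ∧ ∀ e : E,
    0 < Multigraph.coupling ρ ε e * f e ∧ Multigraph.coupling ρ ε e * f e < 1}

/-! Reversing an edge negates both its incidence numbers and its coupling, so rescaling a flow
of `(G,ε)` by `[ρ,ε]` gives a flow of `(G,ρ)`; on `Δ^ρ(G,ε)` that flow is positive. A positive
flow has no directed cut, since the net flow out of any vertex set `S` vanishes while along a
directed cut it is minus the (positive) sum over the cut edges. The pieces are disjoint and
cover `Δ(G,ε)` because `[ρ,ε](e) f(e) > 0` pins `ρ(e)` down from the sign of `f(e)`. -/

namespace Multigraph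

section Coupling

variable {E : Type} (ρ σ : E → Bool) (e : E)

lemma coupling_eq_neg_of_ne {ρ₁ ρ₂ : E → Bool} (h : ρ₁ e ≠ ρ₂ e) :
    coupling ρ₁ σ e = -coupling ρ₂ σ e := by
  unfold coupling
  cases h₁ : ρ₁ e <;> cases h₂ : ρ₂ e <;> cases σ e <;> simp_all

lemma abs_eq_coupling_mul_of_pos {x : ℝ} (h : 0 < coupling ρ σ e * x) :
    |x| = coupling ρ σ e * x := by
  unfold coupling at *
  split_ifs at *
  · rw [one_mul] at *; exact abs_of_pos h
  · rw [neg_one_mul] at *; exact abs_of_neg (neg_pos.1 h)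

noncomputable def signOrientation (ε : E → Bool) (f : E → ℝ) (e : E) : Bool :=
  if 0 < f e then ε e else !ε e

lemma coupling_signOrientation_mul (ε : E → Bool) {f : E → ℝ} (hf : f e ≠ 0) :
    coupling (signOrientation ε f) ε e * f e = |f e| := by
  unfold coupling signOrientation
  rcases hf.lt_or_gt with hneg | hpos
  · simp [hneg.not_gt, abs_of_neg hneg]
  · simp [hpos, abs_of_pos hpos]

end Coupling

variable {V E : Type} (G : Multigraph V E)

lemma inc_of_ne [DecidableEq V] {ρ ε : E → Bool} {e : E} (h : ρ e ≠ ε e) (v : V) :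
    G.inc ρ v e = -G.inc ε v e := by
  unfold inc src tgt
  cases hρ : ρ e <;> cases hε : ε e <;> simp_all

lemma inc_mul_coupling [DecidableEq V] (ρ ε : E → Bool) (v : V) (e : E) :
    (G.inc ρ v e : ℝ) * coupling ρ ε e = G.inc ε v e := by
  by_cases h : ρ e = ε e
  · have : G.inc ρ v e = G.inc ε v e := by unfold inc src tgt; rw [h]
    simp [coupling, h, this]
  · simp [coupling, h, G.inc_of_ne h]

lemma sum_inc [DecidableEq V] (o : E → Bool) (S : Finset V) (e : E) :
    ∑ v ∈ S, G.inc o v e =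
      (if G.tgt o e ∈ S then 1 else 0) - (if G.src o e ∈ S then 1 else 0) := by
  simp [inc, sum_sub_distrib]

lemma sum_inc_eq_zero_of_notMem_cutEdges [Fintype E] [DecidableEq V] {o : E → Bool}
    {S : Finset V} {e : E} (he : e ∉ G.cutEdges S) : ∑ v ∈ S, G.inc o v e = 0 := by
  simp only [cutEdges, mem_filter, mem_univ, true_and, not_not] at he
  have : G.tgt o e ∈ S ↔ G.src o e ∈ S := by
    unfold src tgt
    cases o e <;> simp [he]
  rw [sum_inc]
  by_cases hsrc : G.src o e ∈ S <;> simp [hsrc, this]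

lemma sum_inc_eq_neg_one_of_src_mem [Fintype E] [DecidableEq V] {o : E → Bool}
    {S : Finset V} {e : E} (he : e ∈ G.cutEdges S) (hsrc : G.src o e ∈ S) :
    ∑ v ∈ S, G.inc o v e = -1 := by
  simp only [cutEdges, mem_filter, mem_univ, true_and] at he
  have htgt : G.tgt o e ∉ S := by
    unfold src at hsrc; unfold tgt
    cases ho : o e <;> simp only [ho, Bool.false_eq_true, ite_true, ite_false] at hsrc ⊢ <;> tauto
  simp [sum_inc, hsrc, htgt]

variable {G}

lemma IsFlow.coupling_mul [Fintype E] [DecidableEq V] {ε : E → Bool} {f : E → ℝ}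
    (hf : G.IsFlow ε f) (ρ : E → Bool) : G.IsFlow ρ fun e => coupling ρ ε e * f e := by
  intro v
  rw [← hf v]
  refine sum_congr rfl fun e _ => ?_
  simp only [zsmul_eq_mul, ← mul_assoc, inc_mul_coupling]

lemma IsFlow.sum_sum_inc_smul [Fintype E] [DecidableEq V] {A : Type} [AddCommGroup A]
    {o : E → Bool} {f : E → A} (hf : G.IsFlow o f) (S : Finset V) :
    ∑ e, (∑ v ∈ S, G.inc o v e) • f e = 0 := by
  simp_rw [sum_smul]
  rw [sum_comm]
  exact sum_eq_zero fun v _ => hf v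

theorem IsFlow.totallyCyclic_of_pos [Fintype E] [DecidableEq V] {A : Type} [AddCommGroup A]
    [PartialOrder A] [IsOrderedCancelAddMonoid A] {o : E → Bool} {g : E → A}
    (hg : G.IsFlow o g) (hpos : ∀ e, 0 < g e) : G.TotallyCyclic o := by
  rintro ⟨S, ⟨e₀, he₀, -⟩, hS⟩
  have hnet : ∑ e, (∑ v ∈ S, G.inc o v e) • g e = -∑ e ∈ G.cutEdges S, g e := by
    rw [← sum_subset (subset_univ _) fun e _ he => by
      rw [G.sum_inc_eq_zero_of_notMem_cutEdges he, zero_smul], ← sum_neg_distrib]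
    exact sum_congr rfl fun e he => by
      rw [G.sum_inc_eq_neg_one_of_src_mem he (hS e he), neg_one_smul]
  have hcut : 0 < ∑ e ∈ G.cutEdges S, g e := sum_pos (fun e _ => hpos e) ⟨e₀, he₀⟩
  rw [hg.sum_sum_inc_smul S, zero_eq_neg] at hnet
  exact hcut.ne' hnet

variable [Fintype V] [Fintype E] [DecidableEq V] (G) (ε : E → Bool)

lemma setOf_isFlow_abs_mem_Ioo_eq_iUnion_openPiece :
    {f : E → ℝ | G.IsFlow ε f ∧ ∀ e, 0 < |f e| ∧ |f e| < 1} = ⋃ ρ, G.openPiece ε ρ := by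
  ext f
  simp only [Set.mem_ofPred_eq, Set.mem_iUnion, openPiece]
  constructor
  · rintro ⟨hf, hb⟩
    refine ⟨signOrientation ε f, hf, fun e => ?_⟩
    rw [coupling_signOrientation_mul e ε (abs_pos.1 (hb e).1)]
    exact hb e
  · rintro ⟨ρ, hf, hb⟩
    exact ⟨hf, fun e => by rw [abs_eq_coupling_mul_of_pos ρ ε e (hb e).1]; exact hb e⟩

lemma disjoint_openPiece {ρ₁ ρ₂ : E → Bool} (hne : ρ₁ ≠ ρ₂) :
    Disjoint (G.openPiece ε ρ₁) (G.openPiece ε ρ₂) := by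
  obtain ⟨e, he⟩ := Function.ne_iff.1 hne
  refine Set.disjoint_left.2 fun f h₁ h₂ => ?_
  have hpos₁ := (h₁.2 e).1
  have hpos₂ := (h₂.2 e).1
  rw [coupling_eq_neg_of_ne ε e he] at hpos₁
  linarith

lemma totallyCyclic_of_openPiece_nonempty {ρ : E → Bool} (h : (G.openPiece ε ρ).Nonempty) :
    G.TotallyCyclic ρ :=
  let ⟨_, hf, hb⟩ := h
  (hf.coupling_mul ρ).totallyCyclic_of_pos fun e => (hb e).1

end Multigraph

/-- the set `Δ(G,ε) = {f flow : 0 < |f(e)| < 1}` is the disjoint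
union, over all orientations `ρ` of `G`, of the pieces `Δ^ρ(G,ε)`, and only
totally cyclic orientations contribute nonempty pieces. -/
theorem openFlowSet_decomposition {V E : Type} [Fintype V] [Fintype E]
    [DecidableEq V] (G : Multigraph V E) (ε : E → Bool) :
    ({f : E → ℝ | G.IsFlow ε f ∧ ∀ e : E, 0 < |f e| ∧ |f e| < 1} =
        ⋃ ρ : E → Bool, G.openPiece ε ρ) ∧
    (∀ ρ₁ ρ₂ : E → Bool, ρ₁ ≠ ρ₂ → Disjoint (G.openPiece ε ρ₁) (G.openPiece ε ρ₂)) ∧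
    (∀ ρ : E → Bool, (G.openPiece ε ρ).Nonempty → G.TotallyCyclic ρ) :=
  ⟨G.setOf_isFlow_abs_mem_Ioo_eq_iUnion_openPiece ε, fun _ _ => G.disjoint_openPiece ε,
    fun _ => G.totallyCyclic_of_openPiece_nonempty ε⟩
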